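/- arXiv:0809.1187 — 5 statements merged into one kernel-verified Lean document; each statement's English description precedes it below -/
import Mathlib

section
/- In any MV-algebra, for every element x and natural number n, n·(x ∧ y) = (n·x) ∧ (n·y), where n·x denotes x ⊕ x ⊕ ... ⊕ x (n times). Consequently, if x ∧ y = 0 then (n·x) ∧ (n·y) = 0. -/
/-- An MV-algebra: a set with ⊕ (written `+`), ¬ (written `-`) and `0`
satisfying the standard MV-algebra axioms. -/
class MVAlgebra (A : Type*) extends Add A, Neg A, Zero A where
  add_assoc : ∀ x y z : A, x + (y + z) = (x + y) + z
  add_comm : ∀ x y : A, x + y = y + x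
  add_zero : ∀ x : A, x + 0 = x
  neg_neg : ∀ x : A, - -x = x
  add_neg_zero : ∀ x : A, x + -0 = -0
  luk : ∀ x y : A, -(-x + y) + y = -(-y + x) + x

namespace MVAlgebra

variable {A : Type*} [MVAlgebra A]

/-- The top element `1 = ¬0`. -/
def one : A := -0

/-- Truncated difference `x ⊖ y = ¬(¬x ⊕ y)`. -/
def sub (x y : A) : A := -(-x + y)

/-- Supremum `x ∨ y = (x ⊖ y) ⊕ y`. -/
def sup (x y : A) : A := sub x y + y

/-- Infimum `x ∧ y = ¬(¬x ∨ ¬y)`. -/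
def inf (x y : A) : A := -(sup (-x) (-y))

/-- The natural order: `x ≤ y` iff `x ⊖ y = 0`. -/
def le (x y : A) : Prop := sub x y = 0

/-- `n • x = x ⊕ ⋯ ⊕ x` (`n` times). -/
def nsmul : ℕ → A → A
  | 0, _ => 0
  | n + 1, x => nsmul n x + x

/-- The distance `d(x,y) = (x ⊖ y) ⊕ (y ⊖ x)`. -/
def d (x y : A) : A := sub x y + sub y x

/-- Ideals: contain `0`, downward closed, closed under `⊕`. -/
def IsIdeal (I : Set A) : Prop :=
  (0 : A) ∈ I ∧ (∀ x y : A, x ∈ I → le y x → y ∈ I) ∧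
    (∀ x y : A, x ∈ I → y ∈ I → x + y ∈ I)

/-- Prime ideals: proper ideals with `x ⊖ y ∈ P` or `y ⊖ x ∈ P` for all `x, y`. -/
def IsPrime (P : Set A) : Prop :=
  IsIdeal P ∧ P ≠ Set.univ ∧ ∀ x y : A, sub x y ∈ P ∨ sub y x ∈ P

/-- The principal ideal `(a) = {x | x ≤ n·a for some n}`. -/
def princ (a : A) : Set A := {x : A | ∃ n : ℕ, le x (nsmul n a)}

end MVAlgebra

/-! Induction on `n`. Since `⊕` distributes over `∧`,
`(a ∧ b) ⊕ (x ∧ y) = (a ⊕ x) ∧ (a ⊕ y) ∧ (b ⊕ x) ∧ (b ⊕ y)`, and the cross terms `a ⊕ y`,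
`b ⊕ x` may be dropped as soon as `(y ⊖ x) ∧ (a ⊖ b) = 0` and `(x ⊖ y) ∧ (b ⊖ a) = 0`.
For `a = n·x`, `b = n·y` this holds because `n·x ⊖ n·y ≤ n·(x ⊖ y)`, the elements `x ⊖ y` and
`y ⊖ x` are disjoint, and disjointness from a fixed element is preserved by `⊕`. -/

namespace MVAlgebra

variable {A : Type*} [MVAlgebra A]

instance : AddCommMonoid A where
  add_assoc x y z := (add_assoc x y z).symm
  zero_add x := by rw [add_comm, add_zero]
  add_zero := add_zero
  add_comm := add_comm
  nsmul := nsmul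
  nsmul_zero _ := rfl
  nsmul_succ _ _ := rfl

theorem neg_add_self (x : A) : -x + x = -0 := by
  simpa only [add_neg_zero, neg_neg, zero_add] using (luk x (-0)).symm

theorem sub_self (x : A) : sub x x = 0 := by
  rw [sub, neg_add_self, neg_neg]

-- `MVAlgebra.add_assoc` is stated right-to-left, hence the `_root_` version below.
theorem sub_add_right_self (x z : A) : sub x (x + z) = 0 := by
  rw [sub, ← _root_.add_assoc, neg_add_self, add_comm, add_neg_zero, neg_neg]

theorem sup_comm (x y : A) : sup x y = sup y x := luk x y

theorem add_sub_of_sub_eq_zero {x y : A} (h : sub x y = 0) : x + sub y x = y := by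
  have h' : sup x y = y := by rw [sup, h, zero_add]
  rw [add_comm, ← sup, ← sup_comm, h']

instance : PartialOrder A where
  le := le
  le_refl := sub_self
  le_trans x y z hxy hyz := by
    have hz : x + (sub y x + sub z y) = z := by
      rw [← _root_.add_assoc, add_sub_of_sub_eq_zero hxy, add_sub_of_sub_eq_zero hyz]
    exact hz ▸ sub_add_right_self x _
  le_antisymm x y hxy hyx := by
    rw [← add_sub_of_sub_eq_zero hxy, show sub y x = 0 from hyx, add_zero]

theorem le_iff_sub_eq_zero {x y : A} : x ≤ y ↔ sub x y = 0 := Iff.rfl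

instance : CanonicallyOrderedAdd A where
  exists_add_of_le h := ⟨_, (add_sub_of_sub_eq_zero h).symm⟩
  le_self_add := sub_add_right_self
  le_add_self x y := by rw [add_comm]; exact sub_add_right_self x y

instance : IsOrderedAddMonoid A where
  add_le_add_left x y h z := by
    obtain ⟨c, rfl⟩ := exists_add_of_le h
    rw [add_right_comm]
    exact le_self_add

theorem sub_neg_neg (x y : A) : sub (-y) (-x) = sub x y := by
  rw [sub, sub, neg_neg, add_comm]

theorem neg_le_neg {x y : A} (h : x ≤ y) : -y ≤ -x := by
  rw [le_iff_sub_eq_zero, sub_neg_neg]; exact h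

theorem sub_le_sub_right {x y : A} (h : x ≤ y) (z : A) : sub x z ≤ sub y z :=
  neg_le_neg (add_le_add_left (neg_le_neg h) z)

theorem le_sup_right (x y : A) : y ≤ sup x y := le_add_self

theorem le_sup_left (x y : A) : x ≤ sup x y := sup_comm y x ▸ le_sup_right y x

theorem sup_le {x y z : A} (hx : x ≤ z) (hy : y ≤ z) : sup x y ≤ z :=
  calc sup x y ≤ sup z y := add_le_add_left (sub_le_sub_right hx y) y
    _ = z := by rw [sup_comm, sup, le_iff_sub_eq_zero.1 hy, zero_add]

instance : Lattice A where
  sup := sup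
  le_sup_left := le_sup_left
  le_sup_right := le_sup_right
  sup_le _ _ _ := sup_le
  inf := inf
  inf_le_left x y := by simpa only [inf, neg_neg] using neg_le_neg (le_sup_left (-x) (-y))
  inf_le_right x y := by simpa only [inf, neg_neg] using neg_le_neg (le_sup_right (-x) (-y))
  le_inf x y z hy hz := by
    simpa only [inf, neg_neg] using neg_le_neg (sup_le (neg_le_neg hy) (neg_le_neg hz))

theorem le_neg_zero (x : A) : x ≤ -0 := by
  rw [le_iff_sub_eq_zero, sub, add_neg_zero, neg_neg]

theorem add_sub_self_right (x y : A) : sub (x + y) y = x ⊓ -y := by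
  show _ = inf x (-y)
  simp only [inf, sup, sub, neg_neg]

theorem sub_le_iff_le_add {x y z : A} : sub x y ≤ z ↔ x ≤ y + z := by
  constructor
  · intro h
    calc x ≤ sub x y + y := le_sup_left x y
      _ ≤ z + y := add_le_add_left h y
      _ = y + z := add_comm z y
  · intro h
    calc sub x y ≤ sub (z + y) y := sub_le_sub_right (add_comm y z ▸ h) y
      _ = z ⊓ -y := add_sub_self_right z y
      _ ≤ z := inf_le_left

theorem le_add_sub (x y : A) : x ≤ y + sub x y := sub_le_iff_le_add.1 le_rfl

theorem add_inf (z x y : A) : z + x ⊓ y = (z + x) ⊓ (z + y) := by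
  refine le_antisymm
    (le_inf (add_le_add_right inf_le_left z) (add_le_add_right inf_le_right z)) ?_
  rw [← sub_le_iff_le_add]
  exact le_inf (sub_le_iff_le_add.2 inf_le_left) (sub_le_iff_le_add.2 inf_le_right)

theorem inf_add (x y z : A) : x ⊓ y + z = (x + z) ⊓ (y + z) := by
  simp only [add_comm _ z, add_inf]

theorem neg_add_add_neg_add_neg (a b : A) : -(a + b) + (-a + -b) = -a + -b := by
  have hsplit : -(a + b) + b ⊓ -a = -a := by
    rw [← add_sub_self_right, add_comm b a, ← sub_neg_neg]
    exact add_sub_of_sub_eq_zero (neg_le_neg le_self_add)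
  have habsorb : -b + b ⊓ -a = -b + -a := by
    rw [add_inf, neg_add_self, inf_eq_right.2 (le_neg_zero _)]
  calc -(a + b) + (-a + -b) = -(a + b) + (-b + b ⊓ -a) := by rw [habsorb, add_comm (-b)]
    _ = (-(a + b) + b ⊓ -a) + -b := by ac_rfl
    _ = -a + -b := by rw [hsplit]

theorem sub_inf_sub (x y : A) : sub x y ⊓ sub y x = 0 := by
  have habsorb : sub x y + (x + -y) = x + -y := by
    simpa only [sub, neg_neg] using neg_add_add_neg_add_neg (-x) y
  have h := add_sub_self_right (sub x y) (x + -y)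
  rwa [habsorb, sub_self, show -(x + -y) = sub y x by rw [sub, add_comm], eq_comm] at h

theorem inf_add_eq_zero {a b c : A} (hb : a ⊓ b = 0) (hc : a ⊓ c = 0) : a ⊓ (b + c) = 0 := by
  have hle : a ⊓ (b + c) ≤ c := by
    rw [le_iff_sub_eq_zero, ← nonpos_iff_eq_zero, ← hb]
    exact le_inf (sub_le_iff_le_add.2 (le_add_left inf_le_left))
      (sub_le_iff_le_add.2 (add_comm b c ▸ inf_le_right))
  rw [← nonpos_iff_eq_zero, ← hc]
  exact le_inf inf_le_left hle

theorem inf_nsmul_eq_zero {a b : A} (h : a ⊓ b = 0) : ∀ n : ℕ, a ⊓ n • b = 0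
  | 0 => by rw [zero_nsmul]; exact inf_eq_right.2 zero_le
  | n + 1 => by rw [succ_nsmul]; exact inf_add_eq_zero (inf_nsmul_eq_zero h n) h

theorem sub_add_add_le (a b c d : A) : sub (a + b) (c + d) ≤ sub a c + sub b d := by
  rw [sub_le_iff_le_add, add_add_add_comm]
  exact add_le_add (le_add_sub a c) (le_add_sub b d)

theorem sub_add_right_le (a b x : A) : sub (a + x) (b + x) ≤ sub a b := by
  simpa only [sub_self, add_zero] using sub_add_add_le a x b x

theorem sub_nsmul_le (x y : A) : ∀ n : ℕ, sub (n • x) (n • y) ≤ n • sub x y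
  | 0 => by simp only [zero_nsmul, sub_self, le_refl]
  | n + 1 => by
    simp only [succ_nsmul]
    exact (sub_add_add_le _ _ _ _).trans (add_le_add_left (sub_nsmul_le x y n) _)

theorem inf_sub_nsmul_eq_zero (x y : A) (n : ℕ) : sub y x ⊓ sub (n • x) (n • y) = 0 :=
  nonpos_iff_eq_zero.1 <|
    inf_nsmul_eq_zero (sub_inf_sub y x) n ▸ inf_le_inf_left _ (sub_nsmul_le x y n)

theorem inf_add_add_le {a b x y : A} (h : sub y x ⊓ sub a b = 0) :
    (a + x) ⊓ (b + y) ≤ b + x := by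
  rw [le_iff_sub_eq_zero, ← nonpos_iff_eq_zero, ← h]
  refine le_inf ?_ ((sub_le_sub_right inf_le_left _).trans (sub_add_right_le a b x))
  calc _ ≤ sub (b + y) (b + x) := sub_le_sub_right inf_le_right _
    _ ≤ sub y x := by simpa only [add_comm b] using sub_add_right_le y x b

theorem inf_add_inf {a b x y : A} (h₁ : sub y x ⊓ sub a b = 0) (h₂ : sub x y ⊓ sub b a = 0) :
    a ⊓ b + x ⊓ y = (a + x) ⊓ (b + y) := by
  refine le_antisymm
    (le_inf (add_le_add inf_le_left inf_le_left) (add_le_add inf_le_right inf_le_right)) ?_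
  rw [add_inf, inf_add, inf_add]
  exact le_inf (le_inf inf_le_left (inf_add_add_le h₁))
    (le_inf (inf_comm (b + y) _ ▸ inf_add_add_le h₂) inf_le_right)

theorem nsmul_inf_distrib (x y : A) : ∀ n : ℕ, n • (x ⊓ y) = n • x ⊓ n • y
  | 0 => by simp only [zero_nsmul, inf_idem]
  | n + 1 => by
    rw [succ_nsmul, succ_nsmul, succ_nsmul, nsmul_inf_distrib x y n]
    exact inf_add_inf (inf_sub_nsmul_eq_zero x y n) (inf_sub_nsmul_eq_zero y x n)

end MVAlgebra

open MVAlgebra in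
/-- `n·(x ∧ y) = (n·x) ∧ (n·y)`; consequently `x ∧ y = 0` implies
`(n·x) ∧ (n·y) = 0`. -/
theorem nsmul_inf {A : Type*} [MVAlgebra A] (x y : A) (n : ℕ) :
    nsmul n (inf x y) = inf (nsmul n x) (nsmul n y) ∧
      (inf x y = 0 → inf (nsmul n x) (nsmul n y) = 0) := by
  have h : nsmul n (inf x y) = inf (nsmul n x) (nsmul n y) := nsmul_inf_distrib x y n
  exact ⟨h, fun hxy => by rw [← h, hxy]; exact nsmul_zero n⟩
end

section
/- Let φ : A → B be a morphism of MV-algebras and M a maximal ideal of B. Then φ⁻¹(M) is a maximal ideal of A. -/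
namespace MVAlgebra
/-- A maximal ideal: a proper ideal such that `a ∉ M` iff `¬(n·a) ∈ M`
for some `n ≥ 1`. -/
def IsMaximal {A : Type*} [MVAlgebra A] (M : Set A) : Prop :=
  IsIdeal M ∧ M ≠ Set.univ ∧
    ∀ a : A, a ∉ M ↔ ∃ n : ℕ, 1 ≤ n ∧ -(nsmul n a) ∈ M
end MVAlgebra

namespace MVAlgebra

variable {A B : Type*} [MVAlgebra A] [MVAlgebra B]

theorem le_one (x : A) : le x (-0) := by
  rw [le, sub, add_neg_zero, neg_neg]

theorem IsIdeal.eq_univ_of_one_mem {I : Set A} (hI : IsIdeal I) (h : (-0 : A) ∈ I) :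
    I = Set.univ :=
  Set.eq_univ_of_forall fun x => hI.2.1 _ _ h (le_one x)

structure IsHom (f : A → B) : Prop where
  map_add : ∀ x y : A, f (x + y) = f x + f y
  map_neg : ∀ x : A, f (-x) = -f x
  map_zero : f 0 = 0

namespace IsHom

variable {f : A → B}

theorem map_sub (hf : IsHom f) (x y : A) : f (sub x y) = sub (f x) (f y) := by
  simp only [sub, hf.map_neg, hf.map_add]

theorem map_nsmul (hf : IsHom f) (n : ℕ) (x : A) : f (nsmul n x) = nsmul n (f x) := by
  induction n with
  | zero => exact hf.map_zero
  | succ n ih => rw [nsmul, nsmul, hf.map_add, ih]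

theorem map_le (hf : IsHom f) {x y : A} (h : le x y) : le (f x) (f y) := by
  rw [le, ← hf.map_sub, h, hf.map_zero]

end IsHom

theorem IsIdeal.preimage {f : A → B} {I : Set B} (hI : IsIdeal I) (hf : IsHom f) :
    IsIdeal (f ⁻¹' I) := by
  obtain ⟨hzero, hdown, hadd⟩ := hI
  refine ⟨?_, fun x y hx hyx => hdown _ _ hx (hf.map_le hyx), fun x y hx hy => ?_⟩
  · rw [Set.mem_preimage, hf.map_zero]
    exact hzero
  · rw [Set.mem_preimage, hf.map_add]
    exact hadd _ _ hx hy

theorem IsMaximal.preimage {f : A → B} {M : Set B} (hM : IsMaximal M) (hf : IsHom f) :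
    IsMaximal (f ⁻¹' M) := by
  obtain ⟨hideal, hproper, hmax⟩ := hM
  refine ⟨hideal.preimage hf, fun htop => hproper (hideal.eq_univ_of_one_mem ?_), fun a => ?_⟩
  · have hone : (-0 : A) ∈ f ⁻¹' M := htop ▸ Set.mem_univ _
    rwa [Set.mem_preimage, hf.map_neg, hf.map_zero] at hone
  · simp only [Set.mem_preimage, hmax (f a), hf.map_neg, hf.map_nsmul]

end MVAlgebra

open MVAlgebra in
/-- preimages of maximal ideals under MV-morphisms are maximal. -/
theorem preimage_maximal {A B : Type*} [MVAlgebra A] [MVAlgebra B]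
    (f : A → B) (hadd : ∀ x y : A, f (x + y) = f x + f y)
    (hneg : ∀ x : A, f (-x) = -(f x)) (hzero : f 0 = 0)
    (M : Set B) (hM : IsMaximal M) :
    IsMaximal (f ⁻¹' M) :=
  hM.preimage ⟨hadd, hneg, hzero⟩
end

section
/- Let A be an MV-algebra that is a subalgebra of a product of copies of [0,1], let a₁, a₂ ∈ A, and suppose there is n ≥ 1 with n·a₁ = (n+1)·a₁ and n·a₂ = (n+1)·a₂. If b₁, b₂ ∈ A satisfy [b₁] = [b₂] in A/(a₁ ∨ a₂), then the element b = (b₁ ∧ b₂) ∨ (n·a₁ ∧ b₂) ∨ (n·a₂ ∧ b₁) satisfies [b] = [b₁] in A/(a₁) and [b] = [b₂] in A/(a₂). -/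
/-- gluing formula for `[0,1]`-valued functions. If
`n·fᵢ = (n+1)·fᵢ` pointwise and `g₁ = g₂` on `Z(f₁) ∩ Z(f₂)`, then
`g = (g₁ ∧ g₂) ∨ (n·f₁ ∧ g₂) ∨ (n·f₂ ∧ g₁)` agrees with `g₁` on `Z(f₁)` and
with `g₂` on `Z(f₂)`. Here `n·x = min 1 (n*x)` is the MV-algebra multiple in
`[0,1]` and the lattice operations are the pointwise `max`/`min`. -/
theorem glue_formula {X : Type*} (n : ℕ) (hn : 1 ≤ n)
    (f₁ f₂ g₁ g₂ : X → ℝ)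
    (hf₁ : ∀ x, f₁ x ∈ Set.Icc (0:ℝ) 1) (hf₂ : ∀ x, f₂ x ∈ Set.Icc (0:ℝ) 1)
    (hg₁ : ∀ x, g₁ x ∈ Set.Icc (0:ℝ) 1) (hg₂ : ∀ x, g₂ x ∈ Set.Icc (0:ℝ) 1)
    (ha₁ : ∀ x, min 1 ((n : ℝ) * f₁ x) = min 1 (((n : ℝ) + 1) * f₁ x))
    (ha₂ : ∀ x, min 1 ((n : ℝ) * f₂ x) = min 1 (((n : ℝ) + 1) * f₂ x))
    (hcomp : ∀ x, f₁ x = 0 → f₂ x = 0 → g₁ x = g₂ x) :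
    ∀ x,
      (f₁ x = 0 →
        max (min (g₁ x) (g₂ x))
          (max (min (min 1 ((n : ℝ) * f₁ x)) (g₂ x))
               (min (min 1 ((n : ℝ) * f₂ x)) (g₁ x))) = g₁ x) ∧
      (f₂ x = 0 →
        max (min (g₁ x) (g₂ x))
          (max (min (min 1 ((n : ℝ) * f₁ x)) (g₂ x))
               (min (min 1 ((n : ℝ) * f₂ x)) (g₁ x))) = g₂ x) := by

  have key : ∀ (f : X → ℝ) (x : X), f x ∈ Set.Icc (0:ℝ) 1 →
      (min 1 ((n:ℝ) * f x) = min 1 (((n:ℝ)+1) * f x)) →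
      f x ≠ 0 → min 1 ((n:ℝ) * f x) = 1 := by
    intro f x hf ha hne
    rcases le_or_gt 1 ((n:ℝ) * f x) with h | h
    · exact min_eq_left h
    · exfalso
      have hpos : 0 < f x := lt_of_le_of_ne hf.1 (Ne.symm hne)
      rw [min_eq_right h.le] at ha
      rcases le_or_gt 1 (((n:ℝ)+1) * f x) with hc | hc
      · rw [min_eq_left hc] at ha; linarith
      · rw [min_eq_right hc.le] at ha; nlinarith
  intro x
  constructor
  · intro h0
    have hub : ∀ t : ℝ, min t (g₁ x) ≤ g₁ x := fun t => min_le_right _ _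
    have h10 : min 1 ((n:ℝ) * f₁ x) = 0 := by rw [h0]; simp
    apply le_antisymm
    · apply max_le (min_le_left _ _)
      apply max_le
      · rw [h10]; exact le_trans (min_le_left _ _) (hg₁ x).1
      · exact min_le_right _ _
    · by_cases h2 : f₂ x = 0
      · have hc := hcomp x h0 h2
        refine le_trans ?_ (le_max_left _ _)
        rw [hc, min_self]
      · have h21 : min 1 ((n:ℝ) * f₂ x) = 1 := key f₂ x (hf₂ x) (ha₂ x) h2
        refine le_trans ?_ (le_trans (le_max_right _ _) (le_max_right _ _))
        rw [h21, min_eq_right (hg₁ x).2]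
  · intro h0
    have h20 : min 1 ((n:ℝ) * f₂ x) = 0 := by rw [h0]; simp
    apply le_antisymm
    · apply max_le (min_le_right _ _)
      apply max_le
      · exact min_le_right _ _
      · rw [h20]; exact le_trans (min_le_left _ _) (hg₂ x).1
    · by_cases h1 : f₁ x = 0
      · have hc := hcomp x h1 h0
        refine le_trans ?_ (le_max_left _ _)
        rw [hc, min_self]
      · have h11 : min 1 ((n:ℝ) * f₁ x) = 1 := key f₁ x (hf₁ x) (ha₁ x) h1
        refine le_trans ?_ (le_trans (le_max_left _ _) (le_max_right _ _))
        rw [h11, min_eq_right (hg₂ x).2]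
end

section
/- Let A be a semisimple MV-algebra, viewed as a separating subalgebra of continuous [0,1]-valued functions on its compact Hausdorff space X_A of morphisms A → [0,1] (a ↦ â with â(χ) = χ(a)). If for some a ∈ A the zero set W_a^X = {χ : χ(a) = 0} is open in X_A, then a is archimedean, i.e., there exists n ≥ 1 with n·a = (n+1)·a. -/
namespace MVAlgebra
/-- A morphism from an MV-algebra `A` to the MV-algebra `[0,1]` of reals. -/
def IsHom01 {A : Type*} [MVAlgebra A] (φ : A → ℝ) : Prop :=
  (∀ x : A, φ x ∈ Set.Icc (0:ℝ) 1) ∧ φ 0 = 0 ∧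
    (∀ x : A, φ (-x) = 1 - φ x) ∧
    (∀ x y : A, φ (x + y) = min 1 (φ x + φ y))
end MVAlgebra

open MVAlgebra in
lemma hom_nsmul_eval {A : Type*} [MVAlgebra A] {φ : A → ℝ} (h : IsHom01 φ) (a : A) :
    ∀ n : ℕ, φ (nsmul n a) = min 1 ((n : ℝ) * φ a) := by
  intro n
  induction n with
  | zero =>
    simp only [nsmul, h.2.1, Nat.cast_zero, zero_mul]
    rw [min_eq_right (le_of_lt one_pos)]
  | succ n ih =>
    have ha0 : 0 ≤ φ a := (h.1 a).1
    have ha1 : φ a ≤ 1 := (h.1 a).2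
    show φ (nsmul n a + a) = _
    rw [h.2.2.2, ih]
    push_cast
    rcases le_or_gt ((n : ℝ) * φ a) 1 with hc | hc
    · rw [min_eq_right hc]; ring_nf
    · rw [min_eq_left hc.le, min_eq_left (by nlinarith), min_eq_left (by nlinarith)]

open MVAlgebra in
lemma isCompact_hom01 {A : Type*} [MVAlgebra A] :
    IsCompact {φ : A → ℝ | IsHom01 φ} := by
  have hsub : {φ : A → ℝ | IsHom01 φ} ⊆ Set.pi Set.univ (fun _ => Set.Icc (0:ℝ) 1) := by
    intro φ hφ x _; exact hφ.1 x
  refine IsCompact.of_isClosed_subset (isCompact_univ_pi fun _ => isCompact_Icc) ?_ hsub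
  have : {φ : A → ℝ | IsHom01 φ} =
      (⋂ x : A, {φ : A → ℝ | φ x ∈ Set.Icc (0:ℝ) 1}) ∩
      ({φ : A → ℝ | φ 0 = 0} ∩
      ((⋂ x : A, {φ : A → ℝ | φ (-x) = 1 - φ x}) ∩
      (⋂ x : A, ⋂ y : A, {φ : A → ℝ | φ (x + y) = min 1 (φ x + φ y)}))) := by
    ext φ
    simp only [Set.mem_setOf_eq, Set.mem_inter_iff, Set.mem_iInter, IsHom01]
  rw [this]
  refine IsClosed.inter (isClosed_iInter fun x =>
    IsClosed.preimage (continuous_apply x) isClosed_Icc) (IsClosed.inter ?_ (IsClosed.inter ?_ ?_))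
  · exact isClosed_eq (continuous_apply 0) continuous_const
  · exact isClosed_iInter fun x => isClosed_eq (continuous_apply (-x))
      (continuous_const.sub (continuous_apply x))
  · exact isClosed_iInter fun x => isClosed_iInter fun y => isClosed_eq
      (continuous_apply (x + y)) (continuous_const.min ((continuous_apply x).add (continuous_apply y)))

open MVAlgebra in
/-- let `A` be semisimple, i.e. the evaluation
`a ↦ â : X_A → [0,1]` on the space `X_A = Hom(A,[0,1]) ⊆ [0,1]^A`
(product topology) is injective and `A` is nontrivial. If the zero set
`W_a^X = {χ | χ(a) = 0}` is open in `X_A`, then `a` is archimedean. -/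
theorem open_zero_set_implies_archimedean {A : Type*} [MVAlgebra A]
    (hnt : (one : A) ≠ 0)
    (hss : ∀ a b : A,
      (∀ χ : {φ : A → ℝ // IsHom01 φ}, χ.1 a = χ.1 b) → a = b)
    (a : A)
    (hopen : IsOpen {χ : {φ : A → ℝ // IsHom01 φ} | χ.1 a = 0}) :
    ∃ n : ℕ, 1 ≤ n ∧ nsmul n a = nsmul (n + 1) a := by
  haveI : CompactSpace {φ : A → ℝ // IsHom01 φ} :=
    isCompact_iff_compactSpace.mp isCompact_hom01
  set V : Set {φ : A → ℝ // IsHom01 φ} := {χ | χ.1 a = 0}ᶜ with hV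
  have hVc : IsCompact V := (hopen.isClosed_compl).isCompact
  rcases V.eq_empty_or_nonempty with hVe | hVne
  · refine ⟨1, le_refl 1, hss _ _ fun χ => ?_⟩
    have hz : χ.1 a = 0 := by
      by_contra h
      have : χ ∈ V := h
      rw [hVe] at this
      exact this
    rw [hom_nsmul_eval χ.2, hom_nsmul_eval χ.2, hz, mul_zero, mul_zero]
  · have hcont : ContinuousOn (fun χ : {φ : A → ℝ // IsHom01 φ} => χ.1 a) V :=
      ((continuous_apply a).comp continuous_subtype_val).continuousOn
    obtain ⟨χ₀, hχ₀V, hmin⟩ := hVc.exists_isMinOn hVne hcont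
    set ε : ℝ := χ₀.1 a with hε
    have hε0 : 0 < ε := lt_of_le_of_ne (χ₀.2.1 a).1 (Ne.symm hχ₀V)
    obtain ⟨n, hn⟩ := exists_nat_gt (1 / ε)
    have hn1 : 1 ≤ n := by
      by_contra h
      push_neg at h
      interval_cases n
      simp at hn
      nlinarith [one_div_pos.mpr hε0]
    refine ⟨n, hn1, hss _ _ fun χ => ?_⟩
    rw [hom_nsmul_eval χ.2, hom_nsmul_eval χ.2]
    by_cases hz : χ.1 a = 0
    · rw [hz, mul_zero, mul_zero]
    · have hχV : χ ∈ V := hz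
      have hle : ε ≤ χ.1 a := hmin hχV
      have h1 : (1 : ℝ) ≤ (n : ℝ) * χ.1 a := by
        have : 1 / ε < (n : ℝ) := hn
        have := mul_lt_mul_of_pos_right this hε0
        rw [one_div_mul_cancel (ne_of_gt hε0)] at this
        nlinarith [(Nat.one_le_cast (α := ℝ)).mpr hn1]
      have h2 : (1 : ℝ) ≤ ((n : ℝ) + 1) * χ.1 a := by nlinarith [(χ.2.1 a).1]
      push_cast
      rw [min_eq_left h1, min_eq_left h2]
end

section
/- Let H be a meet-semilattice equipped with a Grothendieck topology ⱼ whose covering families are all finite. If U and V are ⱼ-ideals of H with U ≠ V, then there exists a ⱼ-prime filter P ⊆ H with U ∩ P = ∅ and V ∩ P ≠ ∅ (or symmetrically). Consequently the locale of ⱼ-ideals has enough points. -/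
variable {H : Type*} [SemilatticeInf H] [OrderTop H]

/-- A Grothendieck topology on a meet-semilattice `H`: to each `a ∈ H` a set
`J a` of covering families (sets of elements `≤ a`), such that the singleton
`{a}` covers `a`, covers compose, and covers are stable under meets. -/
structure IsGrothendieckTopology (J : H → Set (Set H)) : Prop where
  le_of_cover : ∀ a : H, ∀ S ∈ J a, ∀ x ∈ S, x ≤ a
  singleton_cover : ∀ a : H, {a} ∈ J a
  compose : ∀ a : H, ∀ S ∈ J a, ∀ T : H → Set H,
    (∀ b ∈ S, T b ∈ J b) → (⋃ b ∈ S, T b) ∈ J a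
  inf_stable : ∀ a b : H, ∀ S ∈ J a, (fun x => x ⊓ b) '' S ∈ J (a ⊓ b)

/-- A `J`-ideal: downward closed, and containing `a` whenever some cover of
`a` is contained in it (in particular whenever the empty family covers `a`). -/
def IsJIdeal (J : H → Set (Set H)) (U : Set H) : Prop :=
  (∀ x y : H, x ∈ U → y ≤ x → y ∈ U) ∧
    (∀ a : H, ∀ S ∈ J a, S ⊆ U → a ∈ U)

/-- A `J`-prime filter: a filter (contains `⊤`, upward closed, meet-closed)
meeting every cover of each of its elements (in particular containing no
element covered by the empty family). -/
def IsJPrimeFilter (J : H → Set (Set H)) (P : Set H) : Prop :=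
  (⊤ : H) ∈ P ∧ (∀ x y : H, x ∈ P → x ≤ y → y ∈ P) ∧
    (∀ x y : H, x ∈ P → y ∈ P → x ⊓ y ∈ P) ∧
    (∀ a : H, ∀ S ∈ J a, a ∈ P → ∃ x ∈ S, x ∈ P)

lemma aux_sep (J : H → Set (Set H)) (hJ : IsGrothendieckTopology J)
    (hfin : ∀ a : H, ∀ S ∈ J a, S.Finite)
    (U V : Set H) (hU : IsJIdeal J U) (v : H) (hvV : v ∈ V) (hvU : v ∉ U) :
    ∃ P : Set H, IsJPrimeFilter J P ∧ U ∩ P = ∅ ∧ (V ∩ P).Nonempty := by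
  classical
  set 𝒮 : Set (Set H) := {P | (⊤ : H) ∈ P ∧ (∀ x y : H, x ∈ P → x ≤ y → y ∈ P) ∧
    (∀ x y : H, x ∈ P → y ∈ P → x ⊓ y ∈ P) ∧ v ∈ P ∧ U ∩ P = ∅} with h𝒮
  have hmem : {x : H | v ≤ x} ∈ 𝒮 := by
    refine ⟨le_top, fun x y hx hxy => le_trans hx hxy,
      fun x y hx hy => le_inf hx hy, le_rfl, ?_⟩
    ext u
    simp only [Set.mem_inter_iff, Set.mem_setOf_eq, Set.mem_empty_iff_false, iff_false, not_and]
    exact fun huU hvu => hvU (hU.1 u v huU hvu)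
  have hchainub : ∀ c ⊆ 𝒮, IsChain (· ⊆ ·) c → c.Nonempty →
      ∃ ub ∈ 𝒮, ∀ s ∈ c, s ⊆ ub := by
    intro c hcS hchain hcne
    refine ⟨⋃₀ c, ?_, fun s hs => Set.subset_sUnion_of_mem hs⟩
    obtain ⟨s0, hs0⟩ := hcne
    have hs0S := hcS hs0
    refine ⟨Set.mem_sUnion.2 ⟨s0, hs0, hs0S.1⟩, ?_, ?_, Set.mem_sUnion.2 ⟨s0, hs0, hs0S.2.2.2.1⟩, ?_⟩
    · rintro x y ⟨s, hs, hxs⟩ hxy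
      exact ⟨s, hs, (hcS hs).2.1 x y hxs hxy⟩
    · rintro x y ⟨s, hs, hxs⟩ ⟨t, ht, hyt⟩
      rcases hchain.total hs ht with h | h
      · exact ⟨t, ht, (hcS ht).2.2.1 x y (h hxs) hyt⟩
      · exact ⟨s, hs, (hcS hs).2.2.1 x y hxs (h hyt)⟩
    · ext u
      simp only [Set.mem_inter_iff, Set.mem_sUnion, Set.mem_empty_iff_false, iff_false, not_and]
      rintro huU ⟨s, hs, hus⟩
      exact Set.eq_empty_iff_forall_notMem.1 (hcS hs).2.2.2.2 u ⟨huU, hus⟩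
  obtain ⟨P, -, hP, hPmax⟩ := zorn_subset_nonempty 𝒮 hchainub _ hmem
  obtain ⟨htop, hup, hinf, hvP, hdisj⟩ := hP
  refine ⟨P, ⟨htop, hup, hinf, ?_⟩, hdisj, ⟨v, hvV, hvP⟩⟩
  intro a S hS haP
  by_contra hno
  push_neg at hno
  -- for each x ∈ S, get p_x ∈ P with p_x ⊓ x ∈ U
  have key : ∀ x ∈ S, ∃ p ∈ P, p ⊓ x ∈ U := by
    intro x hxS
    have hxP : x ∉ P := hno x hxS
    set Q : Set H := {y | ∃ p ∈ P, p ⊓ x ≤ y} with hQ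
    have hPQ : P ⊆ Q := fun p hp => ⟨p, hp, inf_le_left⟩
    have hxQ : x ∈ Q := ⟨⊤, htop, inf_le_right⟩
    have hQnotin : Q ∉ 𝒮 := by
      intro hQS
      exact hxP (hPmax hQS hPQ hxQ)
    have hQfilt : (⊤ : H) ∈ Q ∧ (∀ x y : H, x ∈ Q → x ≤ y → y ∈ Q) ∧
        (∀ x y : H, x ∈ Q → y ∈ Q → x ⊓ y ∈ Q) ∧ v ∈ Q := by
      refine ⟨hPQ htop, fun a b ⟨p, hp, hle⟩ hab => ⟨p, hp, hle.trans hab⟩,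
        ?_, hPQ hvP⟩
      rintro a b ⟨p, hp, hpa⟩ ⟨q, hq, hqb⟩
      refine ⟨p ⊓ q, hinf p q hp hq, ?_⟩
      calc p ⊓ q ⊓ x ≤ (p ⊓ x) ⊓ (q ⊓ x) := by
            simp only [le_inf_iff]
            exact ⟨⟨inf_le_left.trans inf_le_left, inf_le_right⟩,
              ⟨inf_le_left.trans inf_le_right, inf_le_right⟩⟩
        _ ≤ a ⊓ b := inf_le_inf hpa hqb
    have : ¬ (U ∩ Q = ∅) := fun h => hQnotin ⟨hQfilt.1, hQfilt.2.1, hQfilt.2.2.1, hQfilt.2.2.2, h⟩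
    obtain ⟨u, huU, p, hp, hle⟩ := Set.nonempty_iff_ne_empty.2 this
    exact ⟨p, hp, hU.1 u (p ⊓ x) huU hle⟩
  choose! f hfP hfU using key
  have hSfin := hfin a S hS
  set p : H := hSfin.toFinset.inf f with hp
  have hpP : p ∈ P := by
    have : ∀ t : Finset H, (↑t : Set H) ⊆ S → t.inf f ∈ P := by
      intro t
      induction t using Finset.induction_on with
      | empty => intro _; simpa using htop
      | @insert x s hx ih =>
        intro hsub
        rw [Finset.inf_insert]
        refine hinf _ _ (hfP x ?_) (ih ?_)
        · exact hsub (by simp)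
        · exact fun y hy => hsub (by simp [hy])
    refine this _ ?_
    intro y hy
    simpa using (Set.Finite.mem_toFinset hSfin).1 (by simpa using hy)
  have hapP : a ⊓ p ∈ P := hinf a p haP hpP
  have hcov := hJ.inf_stable a p S hS
  have hsub : (fun x => x ⊓ p) '' S ⊆ U := by
    rintro _ ⟨x, hxS, rfl⟩
    have hple : p ≤ f x := Finset.inf_le ((Set.Finite.mem_toFinset hSfin).2 hxS)
    have : x ⊓ p ≤ f x ⊓ x := le_inf (inf_le_right.trans hple) inf_le_left
    exact hU.1 _ _ (hfU x hxS) this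
  have : a ⊓ p ∈ U := hU.2 _ _ hcov hsub
  have := Set.eq_empty_iff_forall_notMem.1 hdisj (a ⊓ p)
  exact this ⟨‹a ⊓ p ∈ U›, hapP⟩

/-- if all covering families of a Grothendieck topology `J` on a
meet-semilattice are finite, then distinct `J`-ideals are separated by a
`J`-prime filter; consequently the locale of `J`-ideals has enough points. -/
theorem jideals_have_enough_points (J : H → Set (Set H))
    (hJ : IsGrothendieckTopology J)
    (hfin : ∀ a : H, ∀ S ∈ J a, S.Finite)
    (U V : Set H) (hU : IsJIdeal J U) (hV : IsJIdeal J V) (hUV : U ≠ V) :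
    ∃ P : Set H, IsJPrimeFilter J P ∧
      ((U ∩ P = ∅ ∧ (V ∩ P).Nonempty) ∨ (V ∩ P = ∅ ∧ (U ∩ P).Nonempty)) := by
  have hex : ∃ v : H, (v ∈ U ∧ v ∉ V) ∨ (v ∈ V ∧ v ∉ U) := by
    by_contra h
    push_neg at h
    exact hUV (Set.ext fun x => by have := h x; tauto)
  rcases hex with ⟨v, hv | hv⟩
  · obtain ⟨P, hP, h1, h2⟩ := aux_sep J hJ hfin V U hV v hv.1 hv.2
    exact ⟨P, hP, Or.inr ⟨h1, h2⟩⟩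
  · obtain ⟨P, hP, h1, h2⟩ := aux_sep J hJ hfin U V hU v hv.1 hv.2
    exact ⟨P, hP, Or.inl ⟨h1, h2⟩⟩
end
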